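/- arXiv:1512.08053 — 3 statements merged into one kernel-verified Lean document; each statement's English description precedes it below -/
import Mathlib

section
/- Let k be a field and R = k[y_0,...,y_n]. If f_0,...,f_n is an R-regular sequence of homogeneous elements all of the same positive degree, then the k-algebra map φ: S = k[y_0,...,y_n] → R given by y_i ↦ f_i is injective. -/
/-!
A regular sequence is algebraically independent. Induct on its length: if `g₀, g₁, …, gᵣ` is
regular in `B`, the images of `g₁, …, gᵣ` form a regular sequence in `B ⧸ (g₀)`, hence are
algebraically independent there. Write a relation `p(g₀, …, gᵣ) = 0` as a polynomial in `g₀`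
with coefficients in `k[g₁, …, gᵣ]`. Reducing mod `g₀` kills its constant coefficient, and since
`g₀` is a nonzerodivisor we may cancel `g₀` and repeat, so every coefficient vanishes.
-/

open MvPolynomial RingTheory.Sequence

theorem Polynomial.eval₂_injective_of_isSMulRegular {A B : Type*} [CommRing A] [CommRing B]
    {χ : A →+* B} {b : B} (hb : IsSMulRegular B b)
    (hχ : Function.Injective ((Ideal.Quotient.mk (Ideal.span {b})).comp χ)) :
    Function.Injective (Polynomial.eval₂ χ b) := by
  have hpeel : ∀ q : Polynomial A, q.eval₂ χ b = 0 → q.coeff 0 = 0 ∧ q.divX.eval₂ χ b = 0 := by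
    intro q hq
    have hsplit : q.eval₂ χ b = q.divX.eval₂ χ b * b + χ (q.coeff 0) := by
      conv_lhs => rw [← q.divX_mul_X_add]
      rw [Polynomial.eval₂_add, Polynomial.eval₂_mul, Polynomial.eval₂_X, Polynomial.eval₂_C]
    have hmem : χ (q.coeff 0) ∈ Ideal.span {b} :=
      Ideal.mem_span_singleton'.mpr ⟨-q.divX.eval₂ χ b, by linear_combination hsplit - hq⟩
    have hcoeff : q.coeff 0 = 0 := hχ (by simpa [Ideal.Quotient.eq_zero_iff_mem] using hmem)
    refine ⟨hcoeff, hb.right_eq_zero_of_smul ?_⟩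
    rw [hcoeff, map_zero, add_zero] at hsplit
    rw [smul_eq_mul, mul_comm, ← hsplit, hq]
  have hcoeff : ∀ i (q : Polynomial A), q.eval₂ χ b = 0 → q.coeff i = 0 := by
    intro i
    induction i with
    | zero => exact fun q hq => (hpeel q hq).1
    | succ i ih => exact fun q hq => by rw [← Polynomial.coeff_divX, ih _ (hpeel q hq).2]
  refine (injective_iff_map_eq_zero (Polynomial.eval₂RingHom χ b)).mpr fun q hq => ?_
  exact Polynomial.ext fun i => hcoeff i q hq

theorem MvPolynomial.aeval_eq_eval₂_finSuccEquiv {R A : Type*} [CommSemiring R] [CommSemiring A]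
    [Algebra R A] {n : ℕ} (g : Fin (n + 1) → A) (p : MvPolynomial (Fin (n + 1)) R) :
    aeval g p = (finSuccEquiv R n p).eval₂ (aeval (R := R) (Fin.tail g)).toRingHom (g 0) := by
  induction p using MvPolynomial.induction_on with
  | C a => simp [finSuccEquiv_apply]
  | add p q hp hq => simp [hp, hq]
  | mul_X p i hp =>
    refine Fin.cases ?_ (fun j => ?_) i <;>
      simp [hp, finSuccEquiv_X_zero, finSuccEquiv_X_succ, Fin.tail]

open scoped Pointwise in
theorem RingTheory.Sequence.isRegular_cons_iff_quotient {B : Type*} [CommRing B] (r : B)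
    (rs : List B) :
    IsRegular B (r :: rs) ↔
      IsSMulRegular B r ∧
        IsRegular (B ⧸ Ideal.span {r}) (rs.map (Ideal.Quotient.mk (Ideal.span {r}))) := by
  have hspan : r • (⊤ : Submodule B B) = Ideal.span {r} := by
    rw [← Submodule.ideal_span_singleton_smul, smul_eq_mul, Ideal.mul_top]
  let e : QuotSMulTop r B ≃+ B ⧸ Ideal.span {r} :=
    (Submodule.quotEquivOfEq _ _ hspan).toAddEquiv
  have he : ∀ a ∈ rs.map (Ideal.Quotient.mk (Ideal.span {r})), ∀ x, e (a • x) = a • e x := by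
    intro a _ x
    obtain ⟨c, rfl⟩ := Ideal.Quotient.mk_surjective a
    obtain ⟨y, rfl⟩ := Submodule.Quotient.mk_surjective _ x
    rfl
  rw [isRegular_cons_iff', e.isRegular_congr (List.forall₂_same.mpr he)]

theorem RingTheory.Sequence.IsRegular.algebraicIndependent {k B : Type*} [Field k] [CommRing B]
    [Algebra k B] {r : ℕ} {g : Fin r → B} (hg : IsRegular B (List.ofFn g)) :
    AlgebraicIndependent k g := by
  induction r generalizing B with
  | zero =>
    have := hg.nontrivial
    exact algebraicIndependent_empty_type_iff.mpr (algebraMap k B).injective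
  | succ r ih =>
    rw [List.ofFn_succ, isRegular_cons_iff_quotient, List.map_ofFn] at hg
    obtain ⟨hg₀, htail⟩ := hg
    have hχ : Function.Injective
        ((Ideal.Quotient.mk (Ideal.span {g 0})).comp (aeval (R := k) (Fin.tail g)).toRingHom) := by
      intro p q hpq
      refine ih htail ?_
      simp only [RingHom.comp_apply, ← Ideal.Quotient.mkₐ_eq_mk k, AlgHom.toRingHom_eq_coe,
        RingHom.coe_coe, comp_aeval_apply] at hpq
      exact hpq
    intro p q hpq
    rw [aeval_eq_eval₂_finSuccEquiv, aeval_eq_eval₂_finSuccEquiv] at hpq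
    exact (finSuccEquiv k r).injective (Polynomial.eval₂_injective_of_isSMulRegular hg₀ hχ hpq)

theorem stmt0_general (k : Type*) [Field k] (n : ℕ) (f : Fin (n + 1) → MvPolynomial (Fin (n + 1)) k)
    (hreg : RingTheory.Sequence.IsRegular (MvPolynomial (Fin (n + 1)) k) (List.ofFn f)) :
    Function.Injective (MvPolynomial.aeval (R := k) f) :=
  hreg.algebraicIndependent

/-- If `f 0, ..., f n` is a regular sequence of homogeneous elements of the same
positive degree in `R = k[y_0,...,y_n]`, then the `k`-algebra map `S → R`, `y_i ↦ f_i`,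
is injective. -/
theorem stmt0 (k : Type*) [Field k] (n : ℕ) (f : Fin (n + 1) → MvPolynomial (Fin (n + 1)) k)
    (d : ℕ) (hd : 0 < d) (hhom : ∀ i, (f i).IsHomogeneous d)
    (hreg : RingTheory.Sequence.IsRegular (MvPolynomial (Fin (n + 1)) k) (List.ofFn f)) :
    Function.Injective (MvPolynomial.aeval (R := k) f) :=
  stmt0_general k n f hreg
end

section
/- Over the complex numbers, the ideal I = (x(y^3 − z^3), y(x^3 − z^3), z(x^3 − y^3)) ⊆ C[x,y,z] of the dual Hesse (Fermat) configuration satisfies: the form F = (x^3 − y^3)(x^3 − z^3)(y^3 − z^3) belongs to I^{(3)} but F ∉ I^2; hence I^{(3)} ⊄ I^2. -/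
/-!
The generators `g₀, g₁, g₂` of `I` are the 2×2 minors (the cross product) of a 3×2
Hilbert–Burch matrix. Substituting `x = y + z`, a line missing the twelve points, keeps two of
these minors coprime, so every syzygy of the substituted minors is a combination of the
substituted columns; lifting back modulo `ℓ = x - y - z` shows that `ℓ` is a nonzerodivisor on
`R/I`. Hence no associated prime of `I` contains all three variables, and since each `X i ^ 4 * F`
is an explicit element of `I ^ 3`, `F` lies in `I ^ 3` localised at every associated prime.

For `F ∉ I ^ 2`, grade `K[x, y, z]` by total degree together with the exponent vector mod 3.
Then `gₐ` has degree `(4, eₐ)` and `F` has degree `(9, 0)`, so the `(9, 0)`-component of any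
`∑ c_{ab} gₐ g_b` is a combination `∑ λₐ Xₐ gₐ²` with scalar `λₐ`; evaluating at four points shows
that `F` is no such combination.
-/

open MvPolynomial

/-- The `m`-th symbolic power `I^(m) = ⋂_{P ∈ Ass(R/I)} (I^m R_P ∩ R)`. -/
noncomputable def symbolicPower {R : Type*} [CommRing R] (I : Ideal R) (m : ℕ) : Ideal R :=
  ⨅ (P : Ideal R) (hP : P ∈ associatedPrimes R (R ⧸ I)),
    letI : P.IsPrime := hP.1
    Ideal.comap (algebraMap R (Localization.AtPrime P))
      (Ideal.map (algebraMap R (Localization.AtPrime P)) (I ^ m))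

open Matrix

section Syzygy

variable {R : Type*} [CommRing R]

theorem cross_apply_smul_eq_of_dotProduct_cross_eq_zero {u w v : Fin 3 → R}
    (hv : v ⬝ᵥ u ⨯₃ w = 0) (k : Fin 3) :
    (u ⨯₃ w) k • v = (v ⨯₃ w) k • u + (u ⨯₃ v) k • w := by
  rw [vec3_dotProduct, cross_apply] at hv
  ext j
  fin_cases k <;> fin_cases j <;>
    simp only [Fin.zero_eta, Fin.mk_one, Fin.reduceFinMk, Fin.isValue, cross_apply, cons_val_zero,
      cons_val_one, cons_val, Pi.smul_apply, Pi.add_apply, smul_eq_mul] at hv ⊢ <;>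
    first | ring1 | linear_combination hv

theorem exists_eq_smul_add_smul_of_dotProduct_cross_eq_zero [IsDomain R] [DecompositionMonoid R]
    {u w v : Fin 3 → R} (hrel : IsRelPrime ((u ⨯₃ w) 1) ((u ⨯₃ w) 2)) (hne : (u ⨯₃ w) 1 ≠ 0)
    (hv : v ⬝ᵥ u ⨯₃ w = 0) : ∃ p q : R, v = p • u + q • w := by
  have hv' := hv
  rw [vec3_dotProduct, cross_apply] at hv'
  obtain ⟨p, hp⟩ : (u ⨯₃ w) 1 ∣ (v ⨯₃ w) 1 := by
    refine hrel.dvd_of_dvd_mul_right ⟨(v ⨯₃ w) 2, ?_⟩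
    simp only [cross_apply, cons_val] at hv' ⊢
    linear_combination w 0 * hv'
  obtain ⟨q, hq⟩ : (u ⨯₃ w) 1 ∣ (u ⨯₃ v) 1 := by
    refine hrel.dvd_of_dvd_mul_right ⟨(u ⨯₃ v) 2, ?_⟩
    simp only [cross_apply, cons_val] at hv' ⊢
    linear_combination -u 0 * hv'
  refine ⟨p, q, smul_right_injective _ hne ?_⟩
  simp only [cross_apply_smul_eq_of_dotProduct_cross_eq_zero hv 1, hp, hq, smul_add, smul_smul]

theorem comp_cross_comp (τ : R →+* R) (u w : Fin 3 → R) :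
    (τ ∘ u) ⨯₃ (τ ∘ w) = τ ∘ (u ⨯₃ w) := by
  ext i
  fin_cases i <;> simp [cross_apply]

theorem isSMulRegular_quotient_span_range_cross [IsDomain R] {u w : Fin 3 → R} {ℓ : R}
    (τ : R →+* R) (hℓ : ℓ ≠ 0) (hτℓ : τ ℓ = 0) (hτ : ∀ r, ℓ ∣ r - τ r)
    (hsyz : ∀ v, v ⬝ᵥ (τ ∘ u) ⨯₃ (τ ∘ w) = 0 → ∃ p q : R, v = p • (τ ∘ u) + q • (τ ∘ w)) :
    IsSMulRegular (R ⧸ Ideal.span (Set.range (u ⨯₃ w))) ℓ := by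
  refine (isSMulRegular_quotient_iff_mem_of_smul_mem _ _).2 fun f h => ?_
  obtain ⟨a, ha⟩ := Ideal.mem_span_range_iff_exists_fun.1 h
  change a ⬝ᵥ u ⨯₃ w = ℓ * f at ha
  obtain ⟨p, q, hpq⟩ := hsyz (τ ∘ a) (by
    rw [comp_cross_comp]
    simpa [dotProduct, hτℓ] using congrArg τ ha)
  have hdvd : ∀ i, ℓ ∣ a i - (p * u i + q * w i) := fun i => by
    have hi : τ (a i) = p * τ (u i) + q * τ (w i) := by simpa using congrFun hpq i
    convert ((hτ (a i)).sub ((hτ (u i)).mul_left p)).sub ((hτ (w i)).mul_left q) using 1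
    linear_combination hi
  choose b hb using hdvd
  have hab : a = p • u + q • w + ℓ • b := by
    ext i
    simp only [Pi.add_apply, Pi.smul_apply, smul_eq_mul]
    linear_combination hb i
  refine Ideal.mem_span_range_iff_exists_fun.2 ⟨b, mul_left_cancel₀ hℓ ?_⟩
  calc ℓ * (b ⬝ᵥ u ⨯₃ w) = (p • u + q • w + ℓ • b) ⬝ᵥ u ⨯₃ w := by
        simp only [add_dotProduct, smul_dotProduct, dot_self_cross, dot_cross_self, smul_eq_mul,
          mul_zero, zero_add]
    _ = ℓ * f := by rw [← hab, ha]

end Syzygy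

section SymbolicPower

variable {R : Type*} [CommRing R]

theorem mem_comap_map_algebraMap_of_mul_mem {P : Ideal R} [P.IsPrime] {J : Ideal R} {s a : R}
    (hs : s ∉ P) (h : s * a ∈ J) :
    a ∈ (J.map (algebraMap R (Localization.AtPrime P))).comap
      (algebraMap R (Localization.AtPrime P)) := by
  have h' := Ideal.mem_map_of_mem (algebraMap R (Localization.AtPrime P)) h
  rw [map_mul] at h'
  exact (Ideal.unit_mul_mem_iff_mem _
    (IsLocalization.map_units (Localization.AtPrime P) (⟨s, hs⟩ : P.primeCompl))).1 h'

theorem mem_symbolicPower_of_pow_mul_mem [IsNoetherianRing R] {I : Ideal R} {m : ℕ} {ι : Type*}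
    {s : ι → R} {ℓ a : R} (hℓ : IsSMulRegular (R ⧸ I) ℓ) (hℓs : ℓ ∈ Ideal.span (Set.range s))
    (hs : ∀ i, ∃ n, s i ^ n * a ∈ I ^ m) : a ∈ symbolicPower I m := by
  simp only [symbolicPower, Ideal.mem_iInf]
  intro P hP
  have := hP.1
  have hℓP : ℓ ∉ P := fun h =>
    (biUnion_associatedPrimes_eq_compl_regular R (R ⧸ I) ▸ Set.mem_biUnion hP h) hℓ
  obtain ⟨i, hi⟩ : ∃ i, s i ∉ P := by
    by_contra! h
    exact hℓP (Ideal.span_le.2 (Set.range_subset_iff.2 h) hℓs)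
  obtain ⟨n, hn⟩ := hs i
  exact mem_comap_map_algebraMap_of_mul_mem (fun h => hi (hP.1.mem_of_pow_mem n h)) hn

end SymbolicPower

section WeightedHomogeneous

theorem weightedHomogeneousComponent_mul_of_isWeightedHomogeneous {σ R M : Type*}
    [CommSemiring R] [AddCancelCommMonoid M] [DecidableEq M] {w : σ → M} {m n : M}
    {ψ : MvPolynomial σ R} (hψ : IsWeightedHomogeneous w ψ n) (φ : MvPolynomial σ R) :
    weightedHomogeneousComponent w (m + n) (φ * ψ) = weightedHomogeneousComponent w m φ * ψ := by
  let _ := weightedGradedAlgebra R w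
  simp only [← weightedDecomposition.decompose'_apply]
  exact DirectSum.coe_decompose_mul_add_of_right_mem _ hψ

/-- The grading by total degree and by the characters of the diagonal action of `μ₃³`. -/
def fermatWeight : Fin 3 → ℕ × (Fin 3 → ZMod 3) := fun i => (1, Pi.single i 1)

theorem weight_fermatWeight (d : Fin 3 →₀ ℕ) :
    Finsupp.weight fermatWeight d = (d.degree, fun j => (d j : ZMod 3)) := by
  rw [Finsupp.weight_eq_sum, Finsupp.degree_eq_sum, Prod.ext_iff]
  constructor
  · simp [fermatWeight, Prod.fst_sum]
  · ext j
    simp [fermatWeight, Prod.snd_sum, Pi.single_apply]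

theorem exists_eq_single_of_weight_fermatWeight_eq {d : Fin 3 →₀ ℕ} {r : Fin 3 → ZMod 3}
    (hd : Finsupp.weight fermatWeight d = (1, r)) :
    ∃ k, d = Finsupp.single k 1 ∧ r = Pi.single k 1 := by
  rw [weight_fermatWeight, Prod.mk.injEq] at hd
  obtain ⟨k, rfl⟩ := (Finsupp.sum_eq_one_iff d).mp hd.1
  refine ⟨k, rfl, ?_⟩
  rw [← hd.2]
  ext j
  simp [Finsupp.single_apply, Pi.single_apply, eq_comm]

variable {R : Type*} [CommSemiring R] {φ : MvPolynomial (Fin 3) R}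

theorem MvPolynomial.IsWeightedHomogeneous.eq_zero_of_fermatWeight {r : Fin 3 → ZMod 3}
    (hφ : IsWeightedHomogeneous fermatWeight φ (1, r)) (hr : ∀ k, r ≠ Pi.single k 1) : φ = 0 :=
  hφ.eq_zero_of_no_monomials fun _ hd =>
    (exists_eq_single_of_weight_fermatWeight_eq hd).elim fun k hk => hr k hk.2

theorem MvPolynomial.IsWeightedHomogeneous.eq_monomial_of_fermatWeight {k : Fin 3}
    (hφ : IsWeightedHomogeneous fermatWeight φ (1, Pi.single k 1)) :
    φ = monomial (Finsupp.single k 1) (coeff (Finsupp.single k 1) φ) :=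
  hφ.eq_monomial_of_unique_weight fun d hd => by
    obtain ⟨k', rfl, hk'⟩ := exists_eq_single_of_weight_fermatWeight_eq hd
    obtain rfl : k = k' := by simpa [Pi.single_apply] using congrFun hk' k
    rfl

end WeightedHomogeneous

section Hesse

variable (K : Type*) [Field K]

noncomputable def hesseGens : Fin 3 → MvPolynomial (Fin 3) K :=
  ![X 0 * (X 1 ^ 3 - X 2 ^ 3), X 1 * (X 0 ^ 3 - X 2 ^ 3), X 2 * (X 0 ^ 3 - X 1 ^ 3)]

noncomputable def fermatForm : MvPolynomial (Fin 3) K :=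
  (X 0 ^ 3 - X 1 ^ 3) * (X 0 ^ 3 - X 2 ^ 3) * (X 1 ^ 3 - X 2 ^ 3)

noncomputable def hesseSyz₁ : Fin 3 → MvPolynomial (Fin 3) K := ![-X 0 ^ 2, X 1 ^ 2, -X 2 ^ 2]

noncomputable def hesseSyz₂ : Fin 3 → MvPolynomial (Fin 3) K :=
  ![X 1 * X 2, -(X 0 * X 2), X 0 * X 1]

/-- The substitution `x = y + z`: a retraction onto `K[y, z]` with kernel `(x - y - z)`. -/
noncomputable def lineRetraction : MvPolynomial (Fin 3) K →+* MvPolynomial (Fin 3) K :=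
  (aeval ![X 1 + X 2, X 1, X 2]).toRingHom

variable {K}

theorem hesseSyz₁_cross_hesseSyz₂ : hesseSyz₁ K ⨯₃ hesseSyz₂ K = hesseGens K := by
  funext i
  fin_cases i <;>
    simp only [Fin.zero_eta, Fin.mk_one, Fin.reduceFinMk, Fin.isValue, cross_apply, hesseSyz₁,
      hesseSyz₂, hesseGens, cons_val_zero, cons_val_one, cons_val] <;>
    ring

theorem lineRetraction_comp_hesseGens :
    lineRetraction K ∘ hesseGens K = ![(X 1 + X 2) * (X 1 ^ 3 - X 2 ^ 3),
      X 1 * ((X 1 + X 2) ^ 3 - X 2 ^ 3), X 2 * ((X 1 + X 2) ^ 3 - X 1 ^ 3)] := by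
  funext i
  fin_cases i <;> simp [lineRetraction, hesseGens]

theorem dvd_sub_lineRetraction (r : MvPolynomial (Fin 3) K) :
    X 0 - X 1 - X 2 ∣ r - lineRetraction K r := by
  have h : (Ideal.Quotient.mkₐ K (Ideal.span {X 0 - X 1 - X 2})).comp
      (aeval ![X 1 + X 2, X 1, X 2]) = Ideal.Quotient.mkₐ K _ := by
    refine MvPolynomial.algHom_ext fun i => ?_
    rw [AlgHom.comp_apply, aeval_X, Ideal.Quotient.mkₐ_eq_mk, Ideal.Quotient.eq,
      Ideal.mem_span_singleton]
    fin_cases i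
    exacts [⟨-1, by simp only [Fin.zero_eta, cons_val_zero]; ring⟩, by simp, by simp]
  rw [← Ideal.mem_span_singleton, ← Ideal.Quotient.eq]
  exact (AlgHom.congr_fun h r).symm

theorem X_one_isRelPrime_X_two : IsRelPrime (X 1 : MvPolynomial (Fin 3) K) (X 2) := by
  refine X_prime.irreducible.isRelPrime_iff_not_dvd.2 fun h => ?_
  simpa using map_dvd (eval ![0, 0, 1]) h

theorem isWeightedHomogeneous_X_pow_three (i : Fin 3) :
    IsWeightedHomogeneous fermatWeight (X i ^ 3 : MvPolynomial (Fin 3) K) (3, 0) := by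
  convert (isWeightedHomogeneous_X K fermatWeight i).pow 3 using 1
  fin_cases i <;> decide

theorem isWeightedHomogeneous_hesseGens (a : Fin 3) :
    IsWeightedHomogeneous fermatWeight (hesseGens K a) (4, Pi.single a 1) := by
  have h := isWeightedHomogeneous_X_pow_three (K := K)
  have hX := isWeightedHomogeneous_X K fermatWeight
  fin_cases a
  · convert (hX 0).mul ((h 1).sub (h 2)) using 1 <;> first | rfl | decide
  · convert (hX 1).mul ((h 0).sub (h 2)) using 1 <;> first | rfl | decide
  · convert (hX 2).mul ((h 0).sub (h 1)) using 1 <;> first | rfl | decide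

theorem isWeightedHomogeneous_fermatForm :
    IsWeightedHomogeneous fermatWeight (fermatForm K) (9, 0) := by
  have h := isWeightedHomogeneous_X_pow_three (K := K)
  exact (((h 0).sub (h 1)).mul ((h 0).sub (h 2))).mul ((h 1).sub (h 2))

theorem X_pow_four_mul_fermatForm_mem (i : Fin 3) :
    X i ^ 4 * fermatForm K ∈ Ideal.span (Set.range (hesseGens K)) ^ 3 := by
  have hg : ∀ a b c, hesseGens K a * hesseGens K b * hesseGens K c ∈
      Ideal.span (Set.range (hesseGens K)) ^ 3 := fun a b c => by
    rw [pow_three']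
    exact Ideal.mul_mem_mul (Ideal.mul_mem_mul (Ideal.subset_span ⟨a, rfl⟩)
      (Ideal.subset_span ⟨b, rfl⟩)) (Ideal.subset_span ⟨c, rfl⟩)
  fin_cases i <;> simp only [Fin.zero_eta, Fin.mk_one, Fin.reduceFinMk, Fin.isValue]
  · convert Ideal.add_mem _ (Ideal.add_mem _ (Ideal.add_mem _
      (Ideal.mul_mem_left _ (-X 1) (hg 0 1 1)) (Ideal.mul_mem_left _ (-X 2) (hg 0 2 2)))
      (Ideal.mul_mem_left _ (X 0) (hg 1 1 1))) (Ideal.mul_mem_left _ (-X 0) (hg 2 2 2)) using 1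
    simp only [hesseGens, fermatForm, cons_val]; ring
  · convert Ideal.add_mem _ (Ideal.add_mem _ (Ideal.add_mem _
      (Ideal.mul_mem_left _ (-X 1) (hg 0 0 0)) (Ideal.mul_mem_left _ (X 0) (hg 0 0 1)))
      (Ideal.mul_mem_left _ (X 2) (hg 1 2 2))) (Ideal.mul_mem_left _ (-X 1) (hg 2 2 2)) using 1
    simp only [hesseGens, fermatForm, cons_val]; ring
  · convert Ideal.add_mem _ (Ideal.add_mem _ (Ideal.add_mem _
      (Ideal.mul_mem_left _ (-X 2) (hg 0 0 0)) (Ideal.mul_mem_left _ (-X 0) (hg 0 0 2)))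
      (Ideal.mul_mem_left _ (X 2) (hg 1 1 1))) (Ideal.mul_mem_left _ (-X 1) (hg 1 1 2)) using 1
    simp only [hesseGens, fermatForm, cons_val]; ring

theorem weightedHomogeneousComponent_mem_span_of_mem_sq {f : MvPolynomial (Fin 3) K}
    (hf : f ∈ Ideal.span (Set.range (hesseGens K)) ^ 2) :
    weightedHomogeneousComponent fermatWeight (9, 0) f ∈
      Submodule.span K (Set.range fun a => X a * hesseGens K a ^ 2) := by
  have hdiag : ∀ a : Fin 3, -(Pi.single a 1 + Pi.single a 1 : Fin 3 → ZMod 3) = Pi.single a 1 := by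
    decide
  have hoff : ∀ a b k : Fin 3, a ≠ b →
      -(Pi.single a 1 + Pi.single b 1 : Fin 3 → ZMod 3) ≠ Pi.single k 1 := by
    decide
  rw [sq, Ideal.span_mul_span', ← Set.image2_mul, Set.image2_range] at hf
  obtain ⟨c, rfl⟩ := Ideal.mem_span_range_iff_exists_fun.1 hf
  rw [map_sum]
  refine Submodule.sum_mem _ fun ⟨a, b⟩ _ => ?_
  rw [show ((9, 0) : ℕ × (Fin 3 → ZMod 3)) = (1, -(Pi.single a 1 + Pi.single b 1)) +
      ((4, Pi.single a 1) + (4, Pi.single b 1)) from Prod.ext rfl (neg_add_cancel _).symm,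
    weightedHomogeneousComponent_mul_of_isWeightedHomogeneous
      ((isWeightedHomogeneous_hesseGens a).mul (isWeightedHomogeneous_hesseGens b))]
  have hcomp := weightedHomogeneousComponent_isWeightedHomogeneous (R := K) (w := fermatWeight)
    (1, -(Pi.single a 1 + Pi.single b 1)) (c (a, b))
  by_cases hab : a = b
  · subst hab
    rw [hdiag] at hcomp ⊢
    rw [hcomp.eq_monomial_of_fermatWeight, ← C_mul_X_eq_monomial, ← smul_eq_C_mul,
      smul_mul_assoc, ← sq]
    exact Submodule.smul_mem _ _ (Submodule.subset_span ⟨a, rfl⟩)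
  · rw [hcomp.eq_zero_of_fermatWeight (fun k => hoff a b k hab), zero_mul]
    exact zero_mem _

variable [CharZero K]

theorem isRelPrime_lineRetraction_hesseGens :
    IsRelPrime (X 1 * ((X 1 + X 2) ^ 3 - X 2 ^ 3) : MvPolynomial (Fin 3) K)
      (X 2 * ((X 1 + X 2) ^ 3 - X 1 ^ 3)) := by
  intro d h₁ h₂
  have h14 : IsUnit (14 : MvPolynomial (Fin 3) K) := by
    rw [← map_ofNat C 14]
    exact (isUnit_iff_ne_zero.2 (by norm_num)).map C
  refine (X_one_isRelPrime_X_two.pow (m := 7) (n := 7)) ?_ ?_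
  · rw [← h14.dvd_mul_left]
    convert dvd_add
      (h₁.mul_left (14 * X 1 ^ 3 - 42 * X 1 ^ 2 * X 2 - 51 * X 1 * X 2 ^ 2 - 18 * X 2 ^ 3))
      (h₂.mul_left (45 * X 1 ^ 3 + 54 * X 1 ^ 2 * X 2)) using 1
    ring
  · rw [← h14.dvd_mul_left]
    convert dvd_add
      (h₂.mul_left (14 * X 2 ^ 3 - 42 * X 2 ^ 2 * X 1 - 51 * X 2 * X 1 ^ 2 - 18 * X 1 ^ 3))
      (h₁.mul_left (45 * X 2 ^ 3 + 54 * X 2 ^ 2 * X 1)) using 1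
    ring

theorem isSMulRegular_quotient_hesse :
    IsSMulRegular (MvPolynomial (Fin 3) K ⧸ Ideal.span (Set.range (hesseGens K)))
      (X 0 - X 1 - X 2 : MvPolynomial (Fin 3) K) := by
  rw [← hesseSyz₁_cross_hesseSyz₂]
  refine isSMulRegular_quotient_span_range_cross (lineRetraction K) ?_ ?_ dvd_sub_lineRetraction
    fun v hv => exists_eq_smul_add_smul_of_dotProduct_cross_eq_zero ?_ ?_ hv
  · exact fun h => by simpa using congrArg (eval ![1, 0, 0]) h
  · simp [lineRetraction]
  · rw [comp_cross_comp, hesseSyz₁_cross_hesseSyz₂, lineRetraction_comp_hesseGens]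
    exact isRelPrime_lineRetraction_hesseGens
  · rw [comp_cross_comp, hesseSyz₁_cross_hesseSyz₂, lineRetraction_comp_hesseGens]
    exact fun h => by simpa using congrArg (eval ![0, 1, 0]) h

theorem fermatForm_mem_symbolicPower_three :
    fermatForm K ∈ symbolicPower (Ideal.span (Set.range (hesseGens K))) 3 :=
  mem_symbolicPower_of_pow_mul_mem (s := X) isSMulRegular_quotient_hesse
    (sub_mem (sub_mem (Ideal.subset_span ⟨0, rfl⟩) (Ideal.subset_span ⟨1, rfl⟩))
      (Ideal.subset_span ⟨2, rfl⟩))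
    fun i => ⟨4, X_pow_four_mul_fermatForm_mem i⟩

theorem fermatForm_not_mem_span :
    fermatForm K ∉ Submodule.span K (Set.range fun a => X a * hesseGens K a ^ 2) := by
  intro hF
  obtain ⟨κ, hκ⟩ := (Submodule.mem_span_range_iff_exists_fun K).1 hF
  have e := fun x => congrArg (eval x) hκ
  have e1 := e ![1, 1, 0]
  have e2 := e ![1, 0, 1]
  have e3 := e ![0, 1, 1]
  have e4 := e ![2, 1, 0]
  simp only [Fin.sum_univ_three, hesseGens, fermatForm, cons_val_zero, cons_val_one, cons_val,
    map_add, map_sub, map_mul, map_pow, smul_eval, eval_X] at e1 e2 e3 e4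
  norm_num at e1 e2 e3 e4
  have : (56 : K) = 0 := by linear_combination -e4 + 36 * e1 - 28 * e2 + 28 * e3
  norm_num at this

theorem fermatForm_not_mem_sq : fermatForm K ∉ Ideal.span (Set.range (hesseGens K)) ^ 2 := by
  intro hF
  have h := weightedHomogeneousComponent_mem_span_of_mem_sq hF
  rw [isWeightedHomogeneous_fermatForm.weightedHomogeneousComponent_same] at h
  exact fermatForm_not_mem_span h

end Hesse

/-- For the dual Hesse (Fermat) configuration ideal
`I = (x(y³−z³), y(x³−z³), z(x³−y³)) ⊆ ℂ[x,y,z]`, the form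
`F = (x³−y³)(x³−z³)(y³−z³)` lies in `I^(3)` but not in `I²`; hence `I^(3) ⊄ I²`. -/
theorem stmt13 :
    let x : MvPolynomial (Fin 3) ℂ := X 0
    let y : MvPolynomial (Fin 3) ℂ := X 1
    let z : MvPolynomial (Fin 3) ℂ := X 2
    let I : Ideal (MvPolynomial (Fin 3) ℂ) :=
      Ideal.span {x * (y ^ 3 - z ^ 3), y * (x ^ 3 - z ^ 3), z * (x ^ 3 - y ^ 3)}
    let F : MvPolynomial (Fin 3) ℂ := (x ^ 3 - y ^ 3) * (x ^ 3 - z ^ 3) * (y ^ 3 - z ^ 3)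
    F ∈ symbolicPower I 3 ∧ F ∉ I ^ 2 ∧ ¬ symbolicPower I 3 ≤ I ^ 2 := by
  intro x y z I F
  have hI : I = Ideal.span (Set.range (hesseGens ℂ)) := by
    rw [hesseGens, range_cons, range_cons, range_cons_empty, Set.singleton_union, Set.singleton_union]
  have hmem : F ∈ symbolicPower I 3 := hI ▸ fermatForm_mem_symbolicPower_three
  have hnot : F ∉ I ^ 2 := hI ▸ fermatForm_not_mem_sq
  exact ⟨hmem, hnot, fun hle => hnot (hle hmem)⟩
end

section
/- Over the field K, an algebraically closed field containing Z/3Z, let I = (xy(x^2−y^2), xz(x^2−z^2), yz(y^2−z^2), x(x^2−y^2)(x^2−z^2)) ⊆ K[x,y,z]. Then the form F = x(x−z)(x+z)(x^2−y^2)((x−z)^2−y^2)((x+z)^2−y^2) belongs to I^{(3)} but F ∉ I^2; hence I^{(3)} ⊄ I^2. -/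
open MvPolynomial

/-!
`F ∈ I^(3)`: in characteristic 3 one has `y³F = g₁³ - g₁g₃²` and `z³F = g₂³ - g₂g₃²` for the
generators `g₁ = xy(x²-y²)`, `g₂ = xz(x²-z²)`, `g₃ = yz(y²-z²)` of `I`, so it suffices that no
associated prime of `I` contains both `y` and `z`, i.e. that `(I : y) ∩ (I : z) = I`. This colon
computation is done by hand: `(I : y) = (x(x²-y²), z(y²-z²))`, and symmetrically for `z`, using
only that the linear forms `x, y, z, x ± y, y ± z` are prime, which is seen by substituting for
one variable.

`F ∉ I²`: setting `y = z = 0` sends `I` into `(x⁵)` but `F` to `x⁹`.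
-/

theorem Prime.mul_dvd_of_dvd_mul {α : Type*} [CommMonoidWithZero α] [IsCancelMulZero α]
    {p q r s : α} (hp : Prime p) (hq : Prime q) (hps : ¬ p ∣ s) (hqs : ¬ q ∣ s)
    (h : p * q ∣ r * s) : p * q ∣ r := by
  obtain ⟨r, rfl⟩ := (hp.dvd_or_dvd (dvd_of_mul_right_dvd h)).resolve_right hps
  rw [mul_assoc] at h
  exact mul_dvd_mul_left p
    ((hq.dvd_or_dvd ((mul_dvd_mul_iff_left hp.ne_zero).mp h)).resolve_right hqs)

namespace Ideal

variable {A : Type*} [CommRing A]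

theorem exists_of_mem_span_four {a b c d x : A} (h : x ∈ span {a, b, c, d}) :
    ∃ r s t u, r * a + s * b + t * c + u * d = x := by
  obtain ⟨r, x₁, hx₁, rfl⟩ := mem_span_insert.mp h
  obtain ⟨s, x₂, hx₂, rfl⟩ := mem_span_insert.mp hx₁
  obtain ⟨t, u, rfl⟩ := mem_span_pair.mp hx₂
  exact ⟨r, s, t, u, by ring⟩

theorem pow_three_sub_mul_sq_mem_pow_three {I : Ideal A} {a b : A} (ha : a ∈ I) (hb : b ∈ I) :
    a ^ 3 - a * b ^ 2 ∈ I ^ 3 :=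
  sub_mem (pow_mem_pow ha 3) (pow_succ' I 2 ▸ mul_mem_mul ha (pow_mem_pow hb 2))

end Ideal

section SymbolicPower

variable {R : Type*} [CommRing R]

theorem mem_symbolicPower_of_forall_exists_mul_mem {I : Ideal R} {m : ℕ} {f : R}
    (h : ∀ P ∈ associatedPrimes R (R ⧸ I), ∃ s ∉ P, s * f ∈ I ^ m) :
    f ∈ symbolicPower I m := by
  simp only [symbolicPower, Ideal.mem_iInf, Ideal.mem_comap]
  intro P hP
  obtain ⟨s, hs, hsf⟩ := h P hP
  have := hP.1
  refine (Ideal.unit_mul_mem_iff_mem _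
    (IsLocalization.map_units _ (⟨s, hs⟩ : P.primeCompl))).mp ?_
  rw [← map_mul]
  exact Ideal.mem_map_of_mem _ hsf

theorem notMem_or_notMem_of_mem_associatedPrimes [IsNoetherianRing R] {I P : Ideal R}
    (hP : P ∈ associatedPrimes R (R ⧸ I)) {a b : R}
    (hab : ∀ f, a * f ∈ I → b * f ∈ I → f ∈ I) : a ∉ P ∨ b ∉ P := by
  obtain ⟨hPrime, x, rfl⟩ := isAssociatedPrime_iff.mp hP
  obtain ⟨f, rfl⟩ := Ideal.Quotient.mk_surjective x
  have hcolon (r : R) : r ∈ Submodule.colon ⊥ {Ideal.Quotient.mk I f} ↔ r * f ∈ I := by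
    simp [Submodule.mem_colon_singleton, Algebra.smul_def, ← map_mul,
      Ideal.Quotient.eq_zero_iff_mem]
  simp only [hcolon]
  by_contra! h
  exact hPrime.ne_top (eq_top_iff.mpr fun r _ => (hcolon r).mpr (I.mul_mem_left r (hab f h.1 h.2)))

theorem mem_symbolicPower_of_pow_mul_mem_s17 [IsNoetherianRing R] {I : Ideal R} {a b f : R}
    {m n : ℕ} (hab : ∀ g, a * g ∈ I → b * g ∈ I → g ∈ I) (ha : a ^ n * f ∈ I ^ m)
    (hb : b ^ n * f ∈ I ^ m) : f ∈ symbolicPower I m := by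
  refine mem_symbolicPower_of_forall_exists_mul_mem fun P hP => ?_
  rcases notMem_or_notMem_of_mem_associatedPrimes hP hab with haP | hbP
  · exact ⟨a ^ n, fun h => haP (hP.1.mem_of_pow_mem n h), ha⟩
  · exact ⟨b ^ n, fun h => hbP (hP.1.mem_of_pow_mem n h), hb⟩

end SymbolicPower

namespace MvPolynomial

variable {σ R : Type*} [CommRing R]

theorem dvd_sub_map_of_dvd_X_sub {L : MvPolynomial σ R}
    (v : MvPolynomial σ R →ₐ[R] MvPolynomial σ R) (h : ∀ m, L ∣ X m - v (X m))
    (p : MvPolynomial σ R) : L ∣ p - v p := by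
  have hv : (Ideal.Quotient.mkₐ R (Ideal.span {L})).comp v = Ideal.Quotient.mkₐ R _ :=
    algHom_ext fun m =>
      Ideal.Quotient.eq.mpr (Ideal.mem_span_singleton.mpr (dvd_sub_comm.mp (h m)))
  exact Ideal.mem_span_singleton.mp (Ideal.Quotient.eq.mp (AlgHom.congr_fun hv p).symm)

theorem X_sub_dvd_X_sub_bind₁_update [DecidableEq σ] (i : σ) (q : MvPolynomial σ R) (m : σ) :
    X i - q ∣ X m - bind₁ (Function.update X i q) (X m) := by
  by_cases hm : m = i
  · simp [hm]
  · simp [hm]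

theorem X_dvd_sub_bind₁_update_zero [DecidableEq σ] (i : σ) (p : MvPolynomial σ R) :
    X i ∣ p - bind₁ (Function.update X i 0) p := by
  simpa using dvd_sub_map_of_dvd_X_sub _ (X_sub_dvd_X_sub_bind₁_update i 0) p

theorem not_dvd_of_eval_eq_zero {L p : MvPolynomial σ R} (x : σ → R) (hL : eval x L = 0)
    (hp : eval x p ≠ 0) : ¬ L ∣ p := by
  rintro ⟨r, rfl⟩
  simp [hL] at hp

variable [IsDomain R]

theorem prime_X_sub [DecidableEq σ] {i : σ} {q : MvPolynomial σ R}
    (hq : bind₁ (Function.update X i q) q = q) (hne : X i - q ≠ 0) : Prime (X i - q) := by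
  have hker : RingHom.ker (bind₁ (R := R) (Function.update X i q)) = Ideal.span {X i - q} := by
    refine le_antisymm (fun p hp => Ideal.mem_span_singleton.mpr ?_) ?_
    · simpa [(RingHom.mem_ker).mp hp] using
        dvd_sub_map_of_dvd_X_sub _ (X_sub_dvd_X_sub_bind₁_update i q) p
    · rw [Ideal.span_le, Set.singleton_subset_iff, SetLike.mem_coe, RingHom.mem_ker, map_sub, hq]
      simp
  exact (Ideal.span_singleton_prime hne).mp (hker ▸ RingHom.ker_isPrime _)

variable {i j : σ}

theorem prime_X_sub_X (hij : i ≠ j) : Prime (X i - X j : MvPolynomial σ R) := by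
  classical
  refine prime_X_sub (by simp [hij.symm]) fun h => ?_
  simpa [hij.symm] using congrArg (eval (Pi.single i 1)) h

theorem prime_X_add_X (hij : i ≠ j) : Prime (X i + X j : MvPolynomial σ R) := by
  classical
  rw [← sub_neg_eq_add]
  refine prime_X_sub (by simp [hij.symm]) fun h => ?_
  simpa [hij.symm] using congrArg (eval (Pi.single i 1)) h

theorem exists_eq_X_mul_of_X_mul_eq_neg (hij : i ≠ j) {a b : MvPolynomial σ R}
    (h : X j * a = -(X i * b)) : ∃ u, a = X i * u ∧ b = -(X j * u) := by
  classical
  obtain ⟨u, hu⟩ := (X_prime.dvd_or_dvd ⟨-b, h.trans (neg_mul_eq_mul_neg _ _)⟩).resolve_left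
    (not_dvd_of_eval_eq_zero (Pi.single j 1) (by simp [hij]) (by simp))
  exact ⟨u, hu, mul_left_cancel₀ (X_ne_zero i) (by linear_combination h - X j * hu)⟩

end MvPolynomial

section TwelvePoints

variable {σ R : Type*} [CommRing R]

variable (R) in
noncomputable def twelvePointIdeal (i j k : σ) : Ideal (MvPolynomial σ R) :=
  Ideal.span {X i * X j * (X i ^ 2 - X j ^ 2), X i * X k * (X i ^ 2 - X k ^ 2),
    X j * X k * (X j ^ 2 - X k ^ 2), X i * (X i ^ 2 - X j ^ 2) * (X i ^ 2 - X k ^ 2)}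

theorem twelvePointIdeal_comm (i j k : σ) :
    twelvePointIdeal R i k j = twelvePointIdeal R i j k := by
  simp only [twelvePointIdeal, Ideal.span_insert]
  rw [show X k * X j * (X k ^ 2 - X j ^ 2) = -(X j * X k * (X j ^ 2 - X k ^ 2) : MvPolynomial σ R)
    by ring, Ideal.span_singleton_neg, show X i * (X i ^ 2 - X k ^ 2) * (X i ^ 2 - X j ^ 2) =
    (X i * (X i ^ 2 - X j ^ 2) * (X i ^ 2 - X k ^ 2) : MvPolynomial σ R) by ring, sup_left_comm]

variable [IsDomain R] {i j k : σ}

theorem mem_span_of_X_mul_mem_twelvePointIdeal (hij : i ≠ j) (hik : i ≠ k) (hjk : j ≠ k)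
    {f : MvPolynomial σ R} (hf : X j * f ∈ twelvePointIdeal R i j k) :
    f ∈ Ideal.span {X i * (X i ^ 2 - X j ^ 2), X k * (X j ^ 2 - X k ^ 2)} := by
  classical
  obtain ⟨α, β, γ, δ, hf⟩ := Ideal.exists_of_mem_span_four hf
  have hdvd : X j ∣ X i * (X i ^ 2 - X k ^ 2) * (β * X k + δ * (X i ^ 2 - X j ^ 2)) :=
    ⟨f - α * (X i * (X i ^ 2 - X j ^ 2)) - γ * (X k * (X j ^ 2 - X k ^ 2)),
      by linear_combination hf⟩
  obtain ⟨w, hw⟩ := (X_prime.dvd_or_dvd hdvd).resolve_left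
    (not_dvd_of_eval_eq_zero (Pi.single i 1) (by simp [hij.symm]) (by simp [hik.symm]))
  have hfw : f = α * (X i * (X i ^ 2 - X j ^ 2)) + γ * (X k * (X j ^ 2 - X k ^ 2))
      + X i * (X i ^ 2 - X k ^ 2) * w :=
    mul_left_cancel₀ (X_ne_zero j) (by linear_combination -hf + X i * (X i ^ 2 - X k ^ 2) * hw)
  -- `w ∈ (z, x² - y²)`: at `z = 0`, `y w = δ (x² - y²)` and `y` is prime to `x - y`, `x + y`.
  obtain ⟨w₁, hw₁⟩ := X_dvd_sub_bind₁_update_zero k w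
  have hvw : (X i - X j) * (X i + X j) ∣ bind₁ (Function.update X k 0) w * X j := by
    refine ⟨bind₁ (Function.update X k 0) δ, ?_⟩
    have := congrArg (bind₁ (R := R) (Function.update X k 0)) hw
    simp [hik, hjk] at this
    linear_combination -this
  obtain ⟨q, hq⟩ := (prime_X_sub_X hij).mul_dvd_of_dvd_mul (prime_X_add_X hij)
    (not_dvd_of_eval_eq_zero (fun _ => 1) (by simp) (by simp))
    (not_dvd_of_eval_eq_zero (Function.update (fun _ => 1) j (-1)) (by simp [hij]) (by simp)) hvw
  refine Ideal.mem_span_pair.mpr ⟨α + (X i ^ 2 - X k ^ 2) * q + X k * w₁, γ + X i * w₁, ?_⟩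
  linear_combination -hfw - X i * (X i ^ 2 - X k ^ 2) * (hw₁ + hq)

theorem mem_twelvePointIdeal_of_mem_span_of_mem_span (hij : i ≠ j) (hik : i ≠ k) (hjk : j ≠ k)
    {f : MvPolynomial σ R}
    (h₁ : f ∈ Ideal.span {X i * (X i ^ 2 - X j ^ 2), X k * (X j ^ 2 - X k ^ 2)})
    (h₂ : f ∈ Ideal.span {X i * (X i ^ 2 - X k ^ 2), X j * (X k ^ 2 - X j ^ 2)}) :
    f ∈ twelvePointIdeal R i j k := by
  classical
  obtain ⟨A, B, hAB⟩ := Ideal.mem_span_pair.mp h₁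
  obtain ⟨C, D, hCD⟩ := Ideal.mem_span_pair.mp h₂
  have hc : (X j - X k) * (X j + X k) ≠ (0 : MvPolynomial σ R) :=
    mul_ne_zero (prime_X_sub_X hjk).ne_zero (prime_X_add_X hjk).ne_zero
  -- At `x = 0` only the `B`- and `D`-terms survive.
  have hBD :
      X k * bind₁ (Function.update X i 0) B = -(X j * bind₁ (Function.update X i 0) D) := by
    have := congrArg (bind₁ (R := R) (Function.update X i 0)) (hAB.trans hCD.symm)
    simp [hij.symm, hik.symm] at this
    exact mul_right_cancel₀ hc (by linear_combination this)
  obtain ⟨u, hu, hDu⟩ := exists_eq_X_mul_of_X_mul_eq_neg hjk hBD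
  obtain ⟨B₁, hB₁⟩ := X_dvd_sub_bind₁_update_zero i B
  obtain ⟨D₁, hD₁⟩ := X_dvd_sub_bind₁_update_zero i D
  -- Both expressions of `(f - u yz(y² - z²)) / x` agree.
  have hAC : (A - C) * (X i ^ 2 - X j ^ 2)
      = (X j - X k) * (X j + X k) * (C - D₁ * X j - B₁ * X k) :=
    mul_left_cancel₀ (X_ne_zero i) (by
      linear_combination hAB - hCD - X k * (X j ^ 2 - X k ^ 2) * (hB₁ + hu)
        - X j * (X j ^ 2 - X k ^ 2) * (hD₁ + hDu))
  obtain ⟨t, ht⟩ := (prime_X_sub_X hjk).mul_dvd_of_dvd_mul (prime_X_add_X hjk)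
    (not_dvd_of_eval_eq_zero (Function.update (fun _ => 1) i 0) (by simp [hij.symm, hik.symm])
      (by simp [hij.symm]))
    (not_dvd_of_eval_eq_zero (Function.update (Pi.single j 1) k (-1)) (by simp [hjk])
      (by simp [hij, hik, hjk])) ⟨_, hAC⟩
  have hC : C = t * (X i ^ 2 - X j ^ 2) + D₁ * X j + B₁ * X k :=
    mul_left_cancel₀ hc (by linear_combination (X i ^ 2 - X j ^ 2) * ht - hAC)
  have hf : f = D₁ * (X i * X j * (X i ^ 2 - X j ^ 2)) + B₁ * (X i * X k * (X i ^ 2 - X k ^ 2))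
      + u * (X j * X k * (X j ^ 2 - X k ^ 2))
      + t * (X i * (X i ^ 2 - X j ^ 2) * (X i ^ 2 - X k ^ 2)) := by
    linear_combination -hCD + X i * (X i ^ 2 - X k ^ 2) * hC
      + X j * (X k ^ 2 - X j ^ 2) * (hD₁ + hDu)
  rw [hf]
  refine add_mem (add_mem (add_mem ?_ ?_) ?_) ?_ <;>
    exact Ideal.mul_mem_left _ _ (Ideal.subset_span (by simp))

theorem mem_twelvePointIdeal_of_X_mul_mem (hij : i ≠ j) (hik : i ≠ k) (hjk : j ≠ k)
    {f : MvPolynomial σ R} (hj : X j * f ∈ twelvePointIdeal R i j k)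
    (hk : X k * f ∈ twelvePointIdeal R i j k) : f ∈ twelvePointIdeal R i j k := by
  rw [← twelvePointIdeal_comm] at hk
  exact mem_twelvePointIdeal_of_mem_span_of_mem_span hij hik hjk
    (mem_span_of_X_mul_mem_twelvePointIdeal hij hik hjk hj)
    (mem_span_of_X_mul_mem_twelvePointIdeal hik hij hjk.symm hk)

end TwelvePoints

section NineLines

def nineLineForm {A : Type*} [CommRing A] (x y z : A) : A :=
  x * (x - z) * (x + z) * (x ^ 2 - y ^ 2) * ((x - z) ^ 2 - y ^ 2) * ((x + z) ^ 2 - y ^ 2)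

theorem y_pow_three_mul_nineLineForm {A : Type*} [CommRing A] [CharP A 3] (x y z : A) :
    y ^ 3 * nineLineForm x y z
      = (x * y * (x ^ 2 - y ^ 2)) ^ 3
        - x * y * (x ^ 2 - y ^ 2) * (y * z * (y ^ 2 - z ^ 2)) ^ 2 := by
  unfold nineLineForm
  linear_combination (x ^ 5 * y ^ 3 * z ^ 4 - x ^ 3 * y ^ 5 * z ^ 4 + x ^ 5 * y ^ 5 * z ^ 2
    - x ^ 7 * y ^ 3 * z ^ 2) * CharP.ofNat_eq_zero A 3

theorem z_pow_three_mul_nineLineForm {A : Type*} [CommRing A] [CharP A 3] (x y z : A) :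
    z ^ 3 * nineLineForm x y z
      = (x * z * (x ^ 2 - z ^ 2)) ^ 3
        - x * z * (x ^ 2 - z ^ 2) * (y * z * (y ^ 2 - z ^ 2)) ^ 2 := by
  unfold nineLineForm
  linear_combination (x ^ 5 * y ^ 2 * z ^ 5 - x ^ 3 * y ^ 4 * z ^ 5 + x ^ 5 * y ^ 4 * z ^ 3
    - x ^ 7 * y ^ 2 * z ^ 3) * CharP.ofNat_eq_zero A 3

variable {σ R : Type*} [CommRing R] {i j k : σ}

theorem X_j_pow_three_mul_nineLineForm_mem [CharP R 3] :
    X j ^ 3 * nineLineForm (X i) (X j) (X k) ∈ twelvePointIdeal R i j k ^ 3 := by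
  rw [y_pow_three_mul_nineLineForm]
  exact Ideal.pow_three_sub_mul_sq_mem_pow_three (Ideal.subset_span (by simp))
    (Ideal.subset_span (by simp))

theorem X_k_pow_three_mul_nineLineForm_mem [CharP R 3] :
    X k ^ 3 * nineLineForm (X i) (X j) (X k) ∈ twelvePointIdeal R i j k ^ 3 := by
  rw [z_pow_three_mul_nineLineForm]
  exact Ideal.pow_three_sub_mul_sq_mem_pow_three (Ideal.subset_span (by simp))
    (Ideal.subset_span (by simp))

theorem nineLineForm_notMem_twelvePointIdeal_sq [IsDomain R] (hij : i ≠ j) (hik : i ≠ k) :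
    nineLineForm (X i) (X j) (X k) ∉ twelvePointIdeal R i j k ^ 2 := by
  classical
  set φ := aeval (R := R) (Pi.single i (Polynomial.X : Polynomial R))
  have hI : (twelvePointIdeal R i j k).map φ ≤ Ideal.span {Polynomial.X ^ 5} := by
    rw [twelvePointIdeal, Ideal.map_span, Ideal.span_le]
    rintro _ ⟨g, hg, rfl⟩
    simp only [Set.mem_insert_iff, Set.mem_singleton_iff] at hg
    rcases hg with rfl | rfl | rfl | rfl <;>
      simp [φ, hij.symm, hik.symm, Ideal.mem_span_singleton]
    exact dvd_of_eq (by ring)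
  intro hF
  have h9 : (Polynomial.X : Polynomial R) ^ 9 ∈ Ideal.span {Polynomial.X ^ 5} ^ 2 := by
    have hφF : φ (nineLineForm (X i) (X j) (X k)) = Polynomial.X ^ 9 := by
      simp [φ, nineLineForm, hij.symm, hik.symm]
      ring
    rw [← hφF]
    refine Ideal.pow_right_mono hI 2 ?_
    rw [← Ideal.map_pow]
    exact Ideal.mem_map_of_mem φ hF
  rw [Ideal.span_singleton_pow, Ideal.mem_span_singleton, ← pow_mul,
    pow_dvd_pow_iff Polynomial.X_ne_zero Polynomial.not_isUnit_X] at h9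
  norm_num at h9

end NineLines

theorem stmt17_general (K : Type*) [Field K] [CharP K 3] :
    let x : MvPolynomial (Fin 3) K := X 0
    let y : MvPolynomial (Fin 3) K := X 1
    let z : MvPolynomial (Fin 3) K := X 2
    let I : Ideal (MvPolynomial (Fin 3) K) :=
      Ideal.span {x * y * (x ^ 2 - y ^ 2), x * z * (x ^ 2 - z ^ 2), y * z * (y ^ 2 - z ^ 2),
        x * (x ^ 2 - y ^ 2) * (x ^ 2 - z ^ 2)}
    let F : MvPolynomial (Fin 3) K :=
      x * (x - z) * (x + z) * (x ^ 2 - y ^ 2) * ((x - z) ^ 2 - y ^ 2) * ((x + z) ^ 2 - y ^ 2)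
    F ∈ symbolicPower I 3 ∧ F ∉ I ^ 2 ∧ ¬ symbolicPower I 3 ≤ I ^ 2 := by
  intro x y z I F
  have h01 : (0 : Fin 3) ≠ 1 := by decide
  have h02 : (0 : Fin 3) ≠ 2 := by decide
  have h12 : (1 : Fin 3) ≠ 2 := by decide
  have hF : F ∈ symbolicPower I 3 :=
    mem_symbolicPower_of_pow_mul_mem_s17 (fun _ => mem_twelvePointIdeal_of_X_mul_mem h01 h02 h12)
      X_j_pow_three_mul_nineLineForm_mem X_k_pow_three_mul_nineLineForm_mem
  have hF₂ : F ∉ I ^ 2 := nineLineForm_notMem_twelvePointIdeal_sq h01 h02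
  exact ⟨hF, hF₂, fun hle => hF₂ (hle hF)⟩

/-- Over an algebraically closed field `K` of characteristic 3, for
`I = (xy(x²−y²), xz(x²−z²), yz(y²−z²), x(x²−y²)(x²−z²)) ⊆ K[x,y,z]`, the form
`F = x(x−z)(x+z)(x²−y²)((x−z)²−y²)((x+z)²−y²)` lies in `I^(3)` but not in `I²`;
hence `I^(3) ⊄ I²`. -/
theorem stmt17 (K : Type*) [Field K] [IsAlgClosed K] [CharP K 3] :
    let x : MvPolynomial (Fin 3) K := X 0
    let y : MvPolynomial (Fin 3) K := X 1
    let z : MvPolynomial (Fin 3) K := X 2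
    let I : Ideal (MvPolynomial (Fin 3) K) :=
      Ideal.span {x * y * (x ^ 2 - y ^ 2), x * z * (x ^ 2 - z ^ 2), y * z * (y ^ 2 - z ^ 2),
        x * (x ^ 2 - y ^ 2) * (x ^ 2 - z ^ 2)}
    let F : MvPolynomial (Fin 3) K :=
      x * (x - z) * (x + z) * (x ^ 2 - y ^ 2) * ((x - z) ^ 2 - y ^ 2) * ((x + z) ^ 2 - y ^ 2)
    F ∈ symbolicPower I 3 ∧ F ∉ I ^ 2 ∧ ¬ symbolicPower I 3 ≤ I ^ 2 :=
  stmt17_general K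
end
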